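/- On a quasi-para-Sasakian manifold, the Ricci curvature in the direction of the Reeb field satisfies S(ξ, ξ) = −tr(A²), where AX = ∇_X ξ and S denotes the Ricci tensor. -/

import Mathlib

/-!
Write `A = ∇ξ`. Once `∇_ξ ξ = 0`, the definition of `R` and metricity give
`g(R(X,ξ)ξ, X) = -g(A²X, X) - ξ(g(AX, X)) + g(AX, ∇_ξ X) + g(A ∇_ξ X, X)`. On a
pseudo-orthonormal frame `∇_ξ` is skew, so the last two terms cancel in the trace, and it remains
to see that `ξ(g(AX, X)) = 0`.

Both facts come from the structure. Normality together with closedness of `Φ` gives `L_ξ η = 0`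
and makes `L_ξ φ` a multiple of `ξ`; feeding this into `dΦ(ξ, X, Y) = 0` expresses
`L_ξ g = g(A·, ·) + g(·, A·)` through `∇_ξ ξ` and the constant `c = η(φξ)`, whose square vanishes
(in the smooth case `c = 0` and `ξ` is Killing). This forces `∇_ξ ξ = 0`, after which `L_ξ g` is
`c` times a tensor, and `c · ξ(f) = 0` for every function `f` gives `ξ(g(AX, X)) = 0`.
-/

/-- An abstract context for a (2n+1)-dimensional almost paracontact metric manifold:
`C` plays the role of the ring of smooth functions, `V` the module of vector fields,
with Lie bracket `bracket`, the derivation action `act` of vector fields on functions,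
a (pseudo-Riemannian, nondegenerate) metric `g`, its Levi-Civita connection `nabla`
(characterized by being torsion-free and metric), and an almost paracontact metric
structure `(phi, xi, eta)`:  `φ² = Id − η ⊗ ξ`, `η(ξ) = 1`,
`g(φX, φY) = −g(X,Y) + η(X)η(Y)`. -/
structure QPSCtx (C V : Type*) [CommRing C] [Algebra ℝ C]
    [AddCommGroup V] [Module C V] where
  bracket : V → V → V
  act : V → C → C
  act_add : ∀ X f₁ f₂, act X (f₁ + f₂) = act X f₁ + act X f₂
  act_mul : ∀ X f₁ f₂, act X (f₁ * f₂) = f₁ * act X f₂ + f₂ * act X f₁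
  g : V → V → C
  g_symm : ∀ X Y, g X Y = g Y X
  g_addl : ∀ X Y Z, g (X + Y) Z = g X Z + g Y Z
  g_smull : ∀ (f : C) X Y, g (f • X) Y = f * g X Y
  g_nondeg : ∀ X, (∀ Y, g X Y = 0) → X = 0
  nabla : V → V → V
  nabla_addl : ∀ X Y Z, nabla (X + Y) Z = nabla X Z + nabla Y Z
  nabla_addr : ∀ X Y Z, nabla X (Y + Z) = nabla X Y + nabla X Z
  nabla_smull : ∀ (f : C) X Y, nabla (f • X) Y = f • nabla X Y
  nabla_leibniz : ∀ X (f : C) Y, nabla X (f • Y) = act X f • Y + f • nabla X Y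
  torsion_free : ∀ X Y, nabla X Y - nabla Y X = bracket X Y
  metric_compat : ∀ X Y Z, act X (g Y Z) = g (nabla X Y) Z + g Y (nabla X Z)
  phi : V → V
  phi_add : ∀ X Y, phi (X + Y) = phi X + phi Y
  phi_smul : ∀ (f : C) X, phi (f • X) = f • phi X
  xi : V
  eta : V → C
  eta_add : ∀ X Y, eta (X + Y) = eta X + eta Y
  eta_smul : ∀ (f : C) X, eta (f • X) = f * eta X
  phi_sq : ∀ X, phi (phi X) = X - eta X • xi
  eta_xi : eta xi = 1
  compat : ∀ X Y, g (phi X) (phi Y) = - g X Y + eta X * eta Y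

namespace QPSCtx
variable {C V : Type*} [CommRing C] [Algebra ℝ C] [AddCommGroup V] [Module C V]
variable (P : QPSCtx C V)

/-- The `(1,1)`-tensor `A X = ∇_X ξ`. -/
def A (X : V) : V := P.nabla X P.xi

/-- The fundamental 2-form `Φ(X,Y) = g(X, φY)`. -/
def Phi (X Y : V) : C := P.g X (P.phi Y)

/-- `2 dη(X,Y) = X(η Y) − Y(η X) − η [X,Y]`. -/
def twoDeta (X Y : V) : C :=
  P.act X (P.eta Y) - P.act Y (P.eta X) - P.eta (P.bracket X Y)

/-- The Nijenhuis torsion `[φ,φ](X,Y) = φ²[X,Y] + [φX,φY] − φ[φX,Y] − φ[X,φY]`. -/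
def nij (X Y : V) : V :=
  P.phi (P.phi (P.bracket X Y)) + P.bracket (P.phi X) (P.phi Y)
    - P.phi (P.bracket (P.phi X) Y) - P.phi (P.bracket X (P.phi Y))

/-- Normality: `N⁽¹⁾(X,Y) = [φ,φ](X,Y) − 2dη(X,Y) ξ = 0`. -/
def Normal : Prop := ∀ X Y, P.nij X Y - P.twoDeta X Y • P.xi = 0

/-- Closedness of the fundamental 2-form: `3 dΦ(X,Y,Z) = 0`. -/
def PhiClosed : Prop := ∀ X Y Z,
  P.act X (P.Phi Y Z) - P.act Y (P.Phi X Z) + P.act Z (P.Phi X Y)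
    - P.Phi (P.bracket X Y) Z + P.Phi (P.bracket X Z) Y - P.Phi (P.bracket Y Z) X = 0

/-- Quasi-para-Sasakian: normal almost paracontact metric with closed fundamental form. -/
def QPS : Prop := P.Normal ∧ P.PhiClosed

/-- Para-Sasakian: normal with `Φ = dη`. -/
def ParaSasakian : Prop := P.Normal ∧ ∀ X Y, 2 * P.Phi X Y = P.twoDeta X Y

/-- The curvature tensor `R(X,Y)Z = ∇_X ∇_Y Z − ∇_Y ∇_X Z − ∇_{[X,Y]} Z`. -/
def R (X Y Z : V) : V :=
  P.nabla X (P.nabla Y Z) - P.nabla Y (P.nabla X Z) - P.nabla (P.bracket X Y) Z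

/-- The deformed 1-form `η̃ = α η`. -/
def etaT (α : ℝ) (X : V) : C := algebraMap ℝ C α * P.eta X

/-- The deformed Reeb field `ξ̃ = ξ / α`. -/
noncomputable def xiT (α : ℝ) : V := (algebraMap ℝ C α⁻¹) • P.xi

/-- The deformed metric `g̃ = β g + (α² − β) η ⊗ η`. -/
def gT (α β : ℝ) (X Y : V) : C :=
  algebraMap ℝ C β * P.g X Y + algebraMap ℝ C (α ^ 2 - β) * (P.eta X * P.eta Y)

/-- The deformed fundamental form `Φ̃(X,Y) = g̃(X, φ Y)`. -/
def PhiT (α β : ℝ) (X Y : V) : C := P.gT α β X (P.phi Y)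

end QPSCtx

theorem eq_zero_of_add_self_eq_zero {M : Type*} [AddCommGroup M] [Module ℝ M] {x : M}
    (h : x + x = 0) : x = 0 := by
  rw [← two_smul ℝ x] at h
  exact (smul_eq_zero.mp h).resolve_left two_ne_zero

namespace QPSCtx

variable {C V : Type*} [CommRing C] [Algebra ℝ C] [AddCommGroup V] [Module C V]
variable (P : QPSCtx C V)

section Linearity

def gₗ : V →ₗ[C] V →ₗ[C] C :=
  LinearMap.mk₂ C P.g P.g_addl P.g_smull
    (fun X Y Z => by rw [P.g_symm, P.g_addl, P.g_symm Y, P.g_symm Z])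
    (fun f X Y => by rw [P.g_symm, P.g_smull, P.g_symm, smul_eq_mul])

def phiₗ : V →ₗ[C] V := ⟨⟨P.phi, P.phi_add⟩, P.phi_smul⟩

def etaₗ : V →ₗ[C] C := ⟨⟨P.eta, P.eta_add⟩, P.eta_smul⟩

def Aₗ : V →ₗ[C] V :=
  ⟨⟨P.A, fun X Y => P.nabla_addl X Y P.xi⟩, fun f X => P.nabla_smull f X P.xi⟩

def actAddHom (X : V) : C →+ C := AddMonoidHom.mk' (P.act X) (P.act_add X)

lemma g_add_right (X Y Z : V) : P.g X (Y + Z) = P.g X Y + P.g X Z := (P.gₗ X).map_add Y Z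

lemma g_smul_right (f : C) (X Y : V) : P.g X (f • Y) = f * P.g X Y := (P.gₗ X).map_smul f Y

lemma g_sub_left (X Y Z : V) : P.g (X - Y) Z = P.g X Z - P.g Y Z := P.gₗ.map_sub₂ X Y Z

lemma g_zero_left (Y : V) : P.g 0 Y = 0 := P.gₗ.map_zero₂ Y

lemma g_sub_right (X Y Z : V) : P.g X (Y - Z) = P.g X Y - P.g X Z := (P.gₗ X).map_sub Y Z

lemma g_neg_left (X Y : V) : P.g (-X) Y = -P.g X Y := P.gₗ.map_neg₂ X Y

lemma g_sum_right {ι : Type*} (X : V) (s : Finset ι) (v : ι → V) :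
    P.g X (∑ i ∈ s, v i) = ∑ i ∈ s, P.g X (v i) := map_sum (P.gₗ X) v s

lemma g_sum_left {ι : Type*} (s : Finset ι) (v : ι → V) (Y : V) :
    P.g (∑ i ∈ s, v i) Y = ∑ i ∈ s, P.g (v i) Y := by
  simp only [P.g_symm _ Y, P.g_sum_right]

lemma phi_zero : P.phi 0 = 0 := P.phiₗ.map_zero

lemma phi_sub (X Y : V) : P.phi (X - Y) = P.phi X - P.phi Y := P.phiₗ.map_sub X Y

lemma eta_zero : P.eta 0 = 0 := P.etaₗ.map_zero

lemma eta_sub (X Y : V) : P.eta (X - Y) = P.eta X - P.eta Y := P.etaₗ.map_sub X Y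

lemma A_add (X Y : V) : P.A (X + Y) = P.A X + P.A Y := P.Aₗ.map_add X Y

lemma A_smul (f : C) (X : V) : P.A (f • X) = f • P.A X := P.Aₗ.map_smul f X

lemma A_sub (X Y : V) : P.A (X - Y) = P.A X - P.A Y := P.Aₗ.map_sub X Y

lemma A_sum {ι : Type*} (s : Finset ι) (v : ι → V) :
    P.A (∑ i ∈ s, v i) = ∑ i ∈ s, P.A (v i) := map_sum P.Aₗ v s

lemma act_zero (X : V) : P.act X 0 = 0 := (P.actAddHom X).map_zero

lemma act_neg (X : V) (f : C) : P.act X (-f) = -P.act X f := (P.actAddHom X).map_neg f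

lemma act_one (X : V) : P.act X 1 = 0 := by
  have h := P.act_mul X 1 1
  simp only [mul_one, one_mul] at h
  exact add_eq_right.mp h.symm

lemma nabla_zero_right (X : V) : P.nabla X 0 = 0 := by
  have h := P.nabla_addr X 0 0
  rw [add_zero] at h
  exact add_eq_right.mp h.symm

lemma bracket_eq (X Y : V) : P.bracket X Y = P.nabla X Y - P.nabla Y X :=
  (P.torsion_free X Y).symm

lemma bracket_self (X : V) : P.bracket X X = 0 := by
  rw [← P.torsion_free, sub_self]

lemma bracket_smul_right (X : V) (f : C) (Y : V) :
    P.bracket X (f • Y) = f • P.bracket X Y + P.act X f • Y := by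
  rw [P.bracket_eq, P.bracket_eq, P.nabla_leibniz, P.nabla_smull, smul_sub]
  abel

end Linearity

section Algebraic

/- Over a general ring `C` the identities `φ ξ = 0` and `η ∘ φ = 0` of the smooth case are not
available: the axioms only make these defects nilpotent (`etaPhiXi_mul_self`,
`etaPhiXi_mul_etaPhi_mul_etaPhi`), so they are carried through the argument. -/
def etaPhi (X : V) : C := P.eta (P.phi X)

def etaPhiXi : C := P.etaPhi P.xi

lemma eta_phi (X : V) : P.eta (P.phi X) = P.etaPhi X := rfl

lemma etaPhi_xi : P.etaPhi P.xi = P.etaPhiXi := rfl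

lemma etaPhi_add (X Y : V) : P.etaPhi (X + Y) = P.etaPhi X + P.etaPhi Y := by
  rw [etaPhi, P.phi_add, P.eta_add, P.eta_phi, P.eta_phi]

lemma etaPhi_smul (f : C) (X : V) : P.etaPhi (f • X) = f * P.etaPhi X := by
  rw [etaPhi, P.phi_smul, P.eta_smul, P.eta_phi]

lemma phi_phi_xi : P.phi (P.phi P.xi) = 0 := by
  rw [P.phi_sq, P.eta_xi, one_smul, sub_self]

lemma phi_xi : P.phi P.xi = P.etaPhiXi • P.xi := by
  have h := P.phi_sq (P.phi P.xi)
  rw [P.phi_phi_xi, P.phi_zero] at h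
  exact (sub_eq_zero.mp h.symm)

lemma etaPhiXi_mul_self : P.etaPhiXi * P.etaPhiXi = 0 := by
  have h : (P.etaPhiXi * P.etaPhiXi) • P.xi = 0 := by
    rw [← smul_smul, ← P.phi_xi, ← P.phi_smul, ← P.phi_xi, P.phi_phi_xi]
  simpa only [P.eta_smul, P.eta_xi, mul_one, P.eta_zero] using congrArg P.eta h

lemma g_xi_xi : P.g P.xi P.xi = 1 := by
  have h := P.compat P.xi P.xi
  rw [P.phi_xi, P.g_smull, P.g_smul_right, ← mul_assoc, P.etaPhiXi_mul_self, zero_mul,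
    P.eta_xi, mul_one] at h
  linear_combination h

lemma g_phi_xi (X : V) : P.g (P.phi X) P.xi = P.etaPhi X := by
  have hX := P.compat X P.xi
  have hφX := P.compat (P.phi X) P.xi
  rw [P.phi_xi, P.g_smul_right, P.eta_xi, mul_one] at hX hφX
  rw [P.phi_sq, P.g_sub_left, P.g_smull, P.g_xi_xi, P.eta_phi] at hφX
  linear_combination hφX - P.etaPhiXi * hX + P.g (P.phi X) P.xi * P.etaPhiXi_mul_self

lemma g_xi_right (X : V) : P.g X P.xi = P.eta X - P.etaPhiXi * P.etaPhi X := by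
  have h := P.compat X P.xi
  rw [P.phi_xi, P.g_smul_right, P.g_phi_xi, P.eta_xi, mul_one] at h
  linear_combination h

lemma g_phi_right_add_g_phi_left (X Y : V) :
    P.g X (P.phi Y) + P.g (P.phi X) Y = P.eta X * P.etaPhi Y + P.etaPhi X * P.eta Y := by
  have h := P.compat X (P.phi Y)
  rw [P.phi_sq, P.g_sub_right, P.g_smul_right, P.g_phi_xi, P.eta_phi] at h
  linear_combination h

lemma etaPhiXi_mul_etaPhi_mul_etaPhi (X Y : V) :
    P.etaPhiXi * (P.etaPhi X * P.etaPhi Y) = 0 := by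
  have h := P.compat (P.phi X) (P.phi Y)
  rw [P.compat X Y, P.phi_sq X, P.phi_sq Y, P.g_sub_left, P.g_sub_right, P.g_sub_right,
    P.g_smull, P.g_smull, P.g_smul_right, P.g_smul_right, P.g_xi_xi, P.g_xi_right X,
    P.g_symm P.xi Y, P.g_xi_right Y, P.eta_phi, P.eta_phi] at h
  linear_combination (-P.etaPhiXi) * h +
    (P.eta X * P.etaPhi Y + P.eta Y * P.etaPhi X) * P.etaPhiXi_mul_self

lemma g_A_xi (X : V) : P.g (P.A X) P.xi = 0 := by
  have h := P.metric_compat X P.xi P.xi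
  rw [P.g_xi_xi, P.act_one, P.g_symm P.xi] at h
  exact eq_zero_of_add_self_eq_zero h.symm

end Algebraic

section Closed

lemma act_g_phi_self (hC : P.PhiClosed) (X Z : V) : P.act Z (P.g X (P.phi X)) = 0 := by
  have h := hC X X Z
  simp only [Phi, P.bracket_self, P.g_zero_left] at h
  linear_combination h

lemma act_g_phi_add_g_phi (hC : P.PhiClosed) (X Y Z : V) :
    P.act Z (P.g X (P.phi Y) + P.g Y (P.phi X)) = 0 := by
  have h := P.act_g_phi_self hC (X + Y) Z
  rw [P.phi_add, P.g_addl, P.g_add_right, P.g_add_right, P.act_add, P.act_add, P.act_add,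
    P.act_g_phi_self hC, P.act_g_phi_self hC] at h
  rw [P.act_add]
  linear_combination h

lemma act_etaPhiXi (hC : P.PhiClosed) (Z : V) : P.act Z P.etaPhiXi = 0 := by
  have h := P.act_g_phi_add_g_phi hC P.xi P.xi Z
  rw [P.g_symm, P.g_phi_xi, P.act_add] at h
  exact eq_zero_of_add_self_eq_zero h

lemma act_etaPhiXi_mul (hC : P.PhiClosed) (Z : V) (f : C) :
    P.act Z (P.etaPhiXi * f) = P.etaPhiXi * P.act Z f := by
  rw [P.act_mul, P.act_etaPhiXi hC, mul_zero, add_zero]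

lemma act_etaPhi (hC : P.PhiClosed) (Z Y : V) :
    P.act Z (P.etaPhi Y) = -(P.etaPhiXi * P.act Z (P.g Y P.xi)) := by
  have h := P.act_g_phi_add_g_phi hC P.xi Y Z
  rw [P.g_symm, P.g_phi_xi, P.phi_xi, P.g_smul_right, P.act_add, P.act_etaPhiXi_mul hC] at h
  linear_combination h

end Closed

section Normal

def lieDerivPhi (Y : V) : V := P.bracket P.xi (P.phi Y) - P.phi (P.bracket P.xi Y)

lemma bracket_etaPhiXi_smul_xi (hC : P.PhiClosed) (W : V) :
    P.bracket (P.etaPhiXi • P.xi) W = P.etaPhiXi • P.bracket P.xi W := by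
  rw [P.bracket_eq, P.bracket_eq, P.nabla_smull, P.nabla_leibniz, P.act_etaPhiXi hC,
    zero_smul, zero_add, smul_sub]

lemma nij_xi_left (hC : P.PhiClosed) (Y : V) :
    P.nij P.xi Y = P.etaPhiXi • P.lieDerivPhi Y - P.phi (P.lieDerivPhi Y) := by
  rw [nij, lieDerivPhi, P.phi_xi, P.bracket_etaPhiXi_smul_xi hC,
    P.bracket_etaPhiXi_smul_xi hC, P.phi_smul, P.phi_sub, smul_sub]
  abel

lemma phi_lieDerivPhi (hN : P.Normal) (hC : P.PhiClosed) (Y : V) :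
    P.phi (P.lieDerivPhi Y) = P.etaPhiXi • P.lieDerivPhi Y - P.twoDeta P.xi Y • P.xi := by
  have h := hN P.xi Y
  rw [P.nij_xi_left hC] at h
  linear_combination (norm := module) -h

lemma twoDeta_xi_left (hN : P.Normal) (hC : P.PhiClosed) (Y : V) : P.twoDeta P.xi Y = 0 := by
  set ν := P.twoDeta P.xi Y
  set L := P.lieDerivPhi Y
  have hφL := P.phi_lieDerivPhi hN hC Y
  have hφφL : P.phi (P.phi L) = -(2 * (P.etaPhiXi * ν)) • P.xi := by
    rw [hφL, P.phi_sub, P.phi_smul, P.phi_smul, hφL, P.phi_xi]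
    linear_combination (norm := module) P.etaPhiXi_mul_self • L
  have hL : L = (P.eta L - 2 * (P.etaPhiXi * ν)) • P.xi := by
    have h := P.phi_sq L
    rw [hφφL] at h
    linear_combination (norm := module) -h
  have h₁ : P.eta (P.phi L) = P.etaPhiXi * P.eta L - ν := by
    rw [hφL, P.eta_sub, P.eta_smul, P.eta_smul, P.eta_xi, mul_one]
  have h₂ : P.eta (P.phi L) = P.etaPhiXi * P.eta L := by
    rw [hL, P.phi_smul, P.phi_xi, P.eta_smul, P.eta_smul, P.eta_xi, ← hL]
    linear_combination (-2 * ν) * P.etaPhiXi_mul_self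
  linear_combination h₁ - h₂

lemma act_xi_eta (hN : P.Normal) (hC : P.PhiClosed) (Y : V) :
    P.act P.xi (P.eta Y) = P.eta (P.bracket P.xi Y) := by
  have h := P.twoDeta_xi_left hN hC Y
  rw [twoDeta, P.eta_xi, P.act_one] at h
  linear_combination h

lemma lieDerivPhi_eq_smul_xi (hN : P.Normal) (hC : P.PhiClosed) (Y : V) :
    P.lieDerivPhi Y = P.eta (P.lieDerivPhi Y) • P.xi := by
  have hφL := P.phi_lieDerivPhi hN hC Y
  rw [P.twoDeta_xi_left hN hC, zero_smul, sub_zero] at hφL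
  have h := P.phi_sq (P.lieDerivPhi Y)
  rw [hφL, P.phi_smul, hφL, smul_smul] at h
  linear_combination (norm := module) -h + P.etaPhiXi_mul_self • P.lieDerivPhi Y

lemma lieDerivPhi_smul (f : C) (Y : V) : P.lieDerivPhi (f • Y) = f • P.lieDerivPhi Y := by
  rw [lieDerivPhi, lieDerivPhi, P.phi_smul, P.bracket_smul_right, P.bracket_smul_right,
    P.phi_add, P.phi_smul, P.phi_smul, smul_sub]
  abel

lemma eta_lieDerivPhi_eq_neg_sub (hN : P.Normal) (hC : P.PhiClosed) (Y : V) :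
    P.eta (P.lieDerivPhi Y)
      = -(P.etaPhiXi * P.act P.xi (P.g Y P.xi)) - P.etaPhi (P.bracket P.xi Y) := by
  rw [lieDerivPhi, P.eta_sub, P.eta_phi, ← P.act_xi_eta hN hC, P.eta_phi, P.act_etaPhi hC]

/- `η ∘ L_ξ φ` is `C`-linear, while the formula above has a derivative term in `Y`;
comparing `Y` with `f • Y` isolates `ξ f`. -/
lemma act_xi_mul_etaPhiXi_mul_g_xi_add_etaPhi (hN : P.Normal) (hC : P.PhiClosed) (f : C)
    (Y : V) : P.act P.xi f * (P.etaPhiXi * P.g Y P.xi + P.etaPhi Y) = 0 := by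
  have h := P.eta_lieDerivPhi_eq_neg_sub hN hC (f • Y)
  rw [P.lieDerivPhi_smul, P.eta_smul, P.eta_lieDerivPhi_eq_neg_sub hN hC Y, P.g_smull,
    P.act_mul, P.bracket_smul_right, P.etaPhi_add, P.etaPhi_smul, P.etaPhi_smul] at h
  linear_combination h

lemma etaPhiXi_mul_act_xi (hN : P.Normal) (hC : P.PhiClosed) (f : C) :
    P.etaPhiXi * P.act P.xi f = 0 := by
  have h := P.act_xi_mul_etaPhiXi_mul_g_xi_add_etaPhi hN hC f P.xi
  rw [P.g_xi_xi, mul_one, P.etaPhi_xi] at h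
  exact eq_zero_of_add_self_eq_zero (by linear_combination h)

lemma etaPhi_mul_act_xi (hN : P.Normal) (hC : P.PhiClosed) (f : C) (X : V) :
    P.etaPhi X * P.act P.xi f = 0 := by
  linear_combination P.act_xi_mul_etaPhiXi_mul_g_xi_add_etaPhi hN hC f X
    - P.g X P.xi * P.etaPhiXi_mul_act_xi hN hC f

lemma lieDerivPhi_eq (hN : P.Normal) (hC : P.PhiClosed) (Y : V) :
    P.lieDerivPhi Y = -P.etaPhi (P.bracket P.xi Y) • P.xi := by
  rw [P.lieDerivPhi_eq_smul_xi hN hC Y, P.eta_lieDerivPhi_eq_neg_sub hN hC Y,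
    P.etaPhiXi_mul_act_xi hN hC, neg_zero, zero_sub]

end Normal

section LieDerivMetric

def lieDerivG (X Y : V) : C := P.g (P.A X) Y + P.g X (P.A Y)

lemma act_xi_g (X Y : V) :
    P.act P.xi (P.g X Y)
      = P.lieDerivG X Y + P.g (P.bracket P.xi X) Y + P.g X (P.bracket P.xi Y) := by
  have h : ∀ Z, P.nabla P.xi Z = P.bracket P.xi Z + P.A Z := fun Z => by
    rw [P.bracket_eq, A]; abel
  rw [P.metric_compat, h, h, P.g_addl, P.g_add_right, lieDerivG]
  ring

lemma act_g_xi_sub_act_g_xi (X Y : V) :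
    P.act X (P.g Y P.xi) - P.act Y (P.g X P.xi) - P.g (P.bracket X Y) P.xi
      = P.g Y (P.A X) - P.g X (P.A Y) := by
  rw [P.metric_compat, P.metric_compat, P.bracket_eq, P.g_sub_left, A, A]
  ring

lemma g_lieDerivPhi (hN : P.Normal) (hC : P.PhiClosed) (X Y : V) :
    P.g X (P.lieDerivPhi Y)
      = -(P.etaPhi (P.bracket P.xi Y) * (P.eta X - P.etaPhiXi * P.etaPhi X)) := by
  rw [P.lieDerivPhi_eq hN hC, P.g_smul_right, P.g_xi_right, neg_mul]

lemma lieDerivG_phi_right (hN : P.Normal) (hC : P.PhiClosed) (X Y : V) :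
    P.lieDerivG X (P.phi Y) = P.etaPhiXi * (P.g (P.A Y) X - P.g (P.A X) Y) := by
  have h := hC P.xi X Y
  have hbr : P.bracket P.xi (P.phi Y) = P.lieDerivPhi Y + P.phi (P.bracket P.xi Y) := by
    rw [lieDerivPhi]; abel
  simp only [Phi] at h
  rw [P.act_xi_g, hbr, P.g_add_right, P.g_lieDerivPhi hN hC, P.g_symm P.xi, P.g_symm P.xi,
    P.g_phi_xi, P.g_phi_xi, P.act_etaPhi hC, P.act_etaPhi hC, P.phi_xi, P.g_smul_right,
    P.g_symm (P.bracket P.xi Y)] at h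
  have hφ := P.g_phi_right_add_g_phi_left X (P.bracket P.xi Y)
  rw [← P.act_xi_eta hN hC] at hφ
  linear_combination h - hφ - P.etaPhiXi * P.act_g_xi_sub_act_g_xi X Y
    - P.etaPhi_mul_act_xi hN hC (P.eta Y) X
    - P.etaPhiXi_mul_etaPhi_mul_etaPhi X (P.bracket P.xi Y)
    - P.etaPhiXi * P.g_symm (P.A Y) X + P.etaPhiXi * P.g_symm (P.A X) Y

lemma lieDerivG_eq (hN : P.Normal) (hC : P.PhiClosed) (X Y : V) :
    P.lieDerivG X Y
      = P.eta Y * P.g X (P.A P.xi)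
        + P.etaPhiXi * (P.g (P.A (P.phi Y)) X - P.g (P.A X) (P.phi Y)) := by
  have hY : Y = P.phi (P.phi Y) + P.eta Y • P.xi := by rw [P.phi_sq]; abel
  have h := P.lieDerivG_phi_right hN hC X (P.phi Y)
  rw [lieDerivG] at h ⊢
  conv_lhs => rw [hY]
  rw [P.A_add, P.A_smul, P.g_add_right, P.g_add_right, P.g_smul_right, P.g_smul_right,
    P.g_A_xi]
  linear_combination h

lemma A_xi (hN : P.Normal) (hC : P.PhiClosed) : P.A P.xi = 0 := by
  have h : ∀ Y, P.g (P.A P.xi) Y = -(P.etaPhiXi * P.g (P.A P.xi) (P.phi Y)) := fun Y => by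
    have h := P.lieDerivG_eq hN hC P.xi Y
    simp only [lieDerivG, P.g_symm P.xi, P.g_A_xi] at h
    linear_combination h
  apply P.g_nondeg
  intro Y
  linear_combination h Y - P.etaPhiXi * h (P.phi Y)
    + P.g (P.A P.xi) (P.phi (P.phi Y)) * P.etaPhiXi_mul_self

lemma act_xi_g_A_self (hN : P.Normal) (hC : P.PhiClosed) (X : V) :
    P.act P.xi (P.g (P.A X) X) = 0 := by
  have h := P.lieDerivG_eq hN hC X X
  rw [lieDerivG, P.A_xi hN hC, P.g_symm X, P.g_symm X, P.g_zero_left, mul_zero, zero_add] at h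
  apply eq_zero_of_add_self_eq_zero
  rw [← P.act_add, h, P.act_etaPhiXi_mul hC, P.etaPhiXi_mul_act_xi hN hC]

end LieDerivMetric

lemma g_R_xi_xi (hA : P.A P.xi = 0) (X Y : V) :
    P.g (P.R X P.xi P.xi) Y
      = -P.g (P.A (P.A X)) Y - P.act P.xi (P.g (P.A X) Y)
        + (P.g (P.A X) (P.nabla P.xi Y) + P.g (P.A (P.nabla P.xi X)) Y) := by
  have hR : P.R X P.xi P.xi = -P.nabla P.xi (P.A X) - P.A (P.A X - P.nabla P.xi X) := by
    rw [R, show P.nabla P.xi P.xi = 0 from hA, P.nabla_zero_right, zero_sub, P.bracket_eq]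
    rfl
  rw [hR, P.A_sub, P.g_sub_left, P.g_sub_left, P.g_neg_left, P.metric_compat]
  ring

section Frame

variable {ι : Type*} {e : ι → V} {ε : ι → C}

lemma act_g_frame [DecidableEq ι] (hε : ∀ i, ε i = 1 ∨ ε i = -1)
    (hortho : ∀ i j, P.g (e i) (e j) = if i = j then ε i else 0) (Z : V) (i j : ι) :
    P.act Z (P.g (e i) (e j)) = 0 := by
  rw [hortho]
  split_ifs
  · rcases hε i with h | h <;> rw [h]
    · exact P.act_one Z
    · rw [P.act_neg, P.act_one, neg_zero]
  · exact P.act_zero Z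

lemma g_nabla_frame_add_g_nabla_frame [DecidableEq ι] (hε : ∀ i, ε i = 1 ∨ ε i = -1)
    (hortho : ∀ i j, P.g (e i) (e j) = if i = j then ε i else 0) (Z : V) (i j : ι) :
    P.g (P.nabla Z (e i)) (e j) + P.g (e i) (P.nabla Z (e j)) = 0 := by
  rw [← P.metric_compat, P.act_g_frame hε hortho]

lemma sum_g_A_add_g_A_eq_zero [Fintype ι]
    (hexpand : ∀ X : V, X = ∑ i, (ε i * P.g X (e i)) • e i) (D : V → V) (hD : ∀ i j, P.g (D (e i)) (e j) + P.g (e i) (D (e j)) = 0) :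
    ∑ i, ε i * (P.g (P.A (e i)) (D (e i)) + P.g (P.A (D (e i))) (e i)) = 0 := by
  have h₁ : ∀ i, P.g (P.A (e i)) (D (e i))
      = ∑ j, ε j * P.g (D (e i)) (e j) * P.g (P.A (e i)) (e j) := fun i => by
    conv_lhs => rw [hexpand (D (e i))]
    simp only [P.g_sum_right, P.g_smul_right]
  have h₂ : ∀ i, P.g (P.A (D (e i))) (e i)
      = ∑ j, ε j * P.g (D (e i)) (e j) * P.g (P.A (e j)) (e i) := fun i => by
    conv_lhs => rw [hexpand (D (e i))]
    simp only [P.A_sum, P.g_sum_left, P.A_smul, P.g_smull]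
  -- `g (D eᵢ) eⱼ` is skew in `i, j`, so swapping the indices negates the second sum
  have hswap : ∑ i, ε i * ∑ j, ε j * P.g (D (e i)) (e j) * P.g (P.A (e j)) (e i)
      = -∑ i, ε i * ∑ j, ε j * P.g (D (e i)) (e j) * P.g (P.A (e i)) (e j) := by
    simp only [Finset.mul_sum]
    rw [Finset.sum_comm, ← Finset.sum_neg_distrib]
    refine Finset.sum_congr rfl fun i _ => ?_
    rw [← Finset.sum_neg_distrib]
    refine Finset.sum_congr rfl fun j _ => ?_
    linear_combination ε i * ε j * P.g (P.A (e i)) (e j) * (hD i j - P.g_symm (e i) (D (e j)))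
  simp only [mul_add, Finset.sum_add_distrib, h₁, h₂, hswap, add_neg_cancel]

end Frame

end QPSCtx

theorem stmt10 {C V : Type*} [CommRing C] [Algebra ℝ C] [AddCommGroup V] [Module C V]
    (P : QPSCtx C V) (h : P.QPS)
    {ι : Type*} [Fintype ι] [DecidableEq ι] (e : ι → V) (ε : ι → C)
    (hε : ∀ i, ε i = 1 ∨ ε i = -1)
    (hortho : ∀ i j, P.g (e i) (e j) = if i = j then ε i else 0)
    (hexpand : ∀ X : V, X = ∑ i, (ε i * P.g X (e i)) • e i) :
    ∑ i, ε i * P.g (P.R (e i) P.xi P.xi) (e i)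
      = -∑ i, ε i * P.g (P.A (P.A (e i))) (e i) := by
  obtain ⟨hN, hC⟩ := h
  have hskew := P.sum_g_A_add_g_A_eq_zero hexpand (P.nabla P.xi)
    (P.g_nabla_frame_add_g_nabla_frame hε hortho P.xi)
  calc ∑ i, ε i * P.g (P.R (e i) P.xi P.xi) (e i)
      = ∑ i, (-(ε i * P.g (P.A (P.A (e i))) (e i))
          + ε i * (P.g (P.A (e i)) (P.nabla P.xi (e i))
            + P.g (P.A (P.nabla P.xi (e i))) (e i))) := by
        refine Finset.sum_congr rfl fun i _ => ?_
        rw [P.g_R_xi_xi (P.A_xi hN hC), P.act_xi_g_A_self hN hC]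
        ring
    _ = -∑ i, ε i * P.g (P.A (P.A (e i))) (e i) := by
        rw [Finset.sum_add_distrib, hskew, add_zero, Finset.sum_neg_distrib]
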